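/- Let n ≥ 2 and δ = 1/(1+2A) with A > 0. Let λ₁ ≤ λ₂ ≤ ... ≤ λₙ be positive reals with λ₂ ≥ (1−δ)λₙ, (n−2)λ₁ ≤ δλₙ, and 1/λ₁ + ∑_{j=2}^{n-1} 1/λⱼ ≤ (1+ε)/λ₁ where ε = δ/(2−3δ). Then for every i ∈ {2,...,n}: (1 − 3δ/2)/(λ₂+⋯+λₙ − (n−2)λ₁) · ∑_{j≠i} 1/λⱼ ≤ 1/((n−1)λᵢλ₁). -/
import Mathlib


open scoped BigOperators

/-- Key eigenvalue inequality in the second order estimate.  `n ≥ 2`, `δ = 1/(1+2A)` with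
`A > 0`, `λ₁ ≤ ⋯ ≤ λₙ > 0` (0-based: `λ ⟨0,_⟩ = λ₁`, `λ ⟨n-1,_⟩ = λₙ`), with
`λ₂ ≥ (1−δ)λₙ`, `(n−2)λ₁ ≤ δλₙ`, and `1/λ₁ + ∑_{j=2}^{n-1} 1/λⱼ ≤ (1+ε)/λ₁`
where `ε = δ/(2−3δ)`.  Then for every `i ∈ {2,…,n}`:
`(1 − 3δ/2)/(λ₂+⋯+λₙ − (n−2)λ₁) · ∑_{j≠i} 1/λⱼ ≤ 1/((n−1)λᵢλ₁)`. -/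
theorem stmt_5 (n : ℕ) (hn : 2 ≤ n) (A δ ε : ℝ) (hA : 0 < A)
    (hδ : δ = 1 / (1 + 2 * A)) (hε : ε = δ / (2 - 3 * δ))
    (lam : Fin n → ℝ) (hmono : Monotone lam) (hpos : ∀ i, 0 < lam i)
    (h2 : lam ⟨1, by omega⟩ ≥ (1 - δ) * lam ⟨n - 1, by omega⟩)
    (h1 : ((n : ℝ) - 2) * lam ⟨0, by omega⟩ ≤ δ * lam ⟨n - 1, by omega⟩)
    (hsum : (lam ⟨0, by omega⟩)⁻¹
        + (∑ j : Fin n, if 1 ≤ (j : ℕ) ∧ (j : ℕ) < n - 1 then (lam j)⁻¹ else 0)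
      ≤ (1 + ε) / lam ⟨0, by omega⟩) :
    ∀ i : Fin n, 1 ≤ (i : ℕ) →
      (1 - 3 * δ / 2) /
          ((∑ j : Fin n, if 1 ≤ (j : ℕ) then lam j else 0)
            - ((n : ℝ) - 2) * lam ⟨0, by omega⟩)
        * (∑ j : Fin n, if j ≠ i then (lam j)⁻¹ else 0)
      ≤ 1 / (((n : ℝ) - 1) * lam i * lam ⟨0, by omega⟩) := by
  intro i hi
  have hapos : 0 < lam ⟨0, by omega⟩ := hpos _
  have hbpos : 0 < lam ⟨1, by omega⟩ := hpos _
  have hcpos : 0 < lam ⟨n - 1, by omega⟩ := hpos _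
  have hipos : 0 < lam i := hpos i
  have hn2' : (2:ℝ) ≤ (n:ℝ) := by exact_mod_cast hn
  have hn2 : (0:ℝ) ≤ (n:ℝ) - 2 := by linarith
  have hn1 : (0:ℝ) < (n:ℝ) - 1 := by linarith
  have hlic : lam i ≤ lam ⟨n - 1, by omega⟩ := by
    apply hmono
    have := i.isLt
    simp [Fin.le_def]
    omega
  -- δ facts
  have hA1 : (1:ℝ) < 1 + 2 * A := by linarith
  have hδ0 : 0 < δ := by rw [hδ]; positivity
  have hδ1 : δ < 1 := by rw [hδ, div_lt_one (by linarith)]; linarith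
  -- abbreviations
  set a := lam ⟨0, by omega⟩ with ha
  set c := lam ⟨n - 1, by omega⟩ with hc
  set T := ∑ j : Fin n, (lam j)⁻¹ with hT
  -- rewrite the i-excluded sum
  have hSi : (∑ j : Fin n, if j ≠ i then (lam j)⁻¹ else 0) = T - (lam i)⁻¹ := by
    have key : ∀ j : Fin n, (if j ≠ i then (lam j)⁻¹ else 0)
        = (lam j)⁻¹ - (if j = i then (lam j)⁻¹ else 0) := by
      intro j; by_cases h : j = i <;> simp [h]
    rw [Finset.sum_congr rfl (fun j _ => key j), Finset.sum_sub_distrib]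
    simp [hT]
  -- rewrite hsum
  have hhsum : T - c⁻¹ ≤ (1 + ε) / a := by
    have key : ∀ j : Fin n, (if 1 ≤ (j:ℕ) ∧ (j:ℕ) < n - 1 then (lam j)⁻¹ else 0)
        = (lam j)⁻¹ - (if j = (⟨0, by omega⟩ : Fin n) then (lam j)⁻¹ else 0)
          - (if j = (⟨n-1, by omega⟩ : Fin n) then (lam j)⁻¹ else 0) := by
      rintro ⟨v, hv⟩
      simp only [Fin.mk.injEq]
      by_cases h0 : v = 0
      · simp [h0, show ¬ ((0:ℕ) = n - 1) by omega]
      · by_cases hN : v = n - 1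
        · simp [h0, hN, show ¬ (n - 1 < n - 1) by omega, show ¬ (n - 1 = 0) by omega]
        · simp [h0, hN, show (1 ≤ v ∧ v < n - 1) from ⟨by omega, by omega⟩]
    rw [Finset.sum_congr rfl (fun j _ => key j), Finset.sum_sub_distrib,
      Finset.sum_sub_distrib] at hsum
    simp only [Finset.sum_ite_eq', Finset.mem_univ, if_true] at hsum
    rw [← ha, ← hc, ← hT] at hsum
    linarith
  -- lower bound on the denominator sum
  have hDsum : ((n:ℝ) - 2) * lam ⟨1, by omega⟩ + c
      ≤ ∑ j : Fin n, if 1 ≤ (j:ℕ) then lam j else 0 := by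
    have key : ∀ j : Fin n,
        (if 1 ≤ (j:ℕ) ∧ (j:ℕ) < n - 1 then lam ⟨1, by omega⟩ else 0)
          + (if j = (⟨n-1, by omega⟩ : Fin n) then lam j else 0)
        ≤ (if 1 ≤ (j:ℕ) then lam j else 0) := by
      rintro ⟨v, hv⟩
      simp only [Fin.mk.injEq]
      by_cases h0 : v = 0
      · simp [h0, show ¬ ((0:ℕ) = n - 1) by omega]
      · by_cases hN : v = n - 1
        · simp [h0, hN, show ¬ (n - 1 < n - 1) by omega, show 1 ≤ n - 1 by omega,
            show ¬ (n - 1 = 0) by omega]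
        · have hb : lam ⟨1, by omega⟩ ≤ lam ⟨v, hv⟩ := by
            apply hmono; rw [Fin.le_def]; simp; omega
          simp [h0, hN, show (1 ≤ v ∧ v < n - 1) from ⟨by omega, by omega⟩,
            show 1 ≤ v by omega]
          linarith
    have hsum2 := Finset.sum_le_sum (fun j (_ : j ∈ Finset.univ) => key j)
    rw [Finset.sum_add_distrib] at hsum2
    have hconst : ∑ j : Fin n, (if 1 ≤ (j:ℕ) ∧ (j:ℕ) < n - 1 then lam ⟨1, by omega⟩ else 0)
        = ((n:ℝ) - 2) * lam ⟨1, by omega⟩ := by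
      rw [Fin.sum_univ_eq_sum_range (fun j => if 1 ≤ j ∧ j < n - 1 then lam ⟨1, by omega⟩ else 0)]
      rw [← Finset.sum_filter]
      have h1' : (Finset.range n).filter (fun j => 1 ≤ j ∧ j < n - 1) = Finset.Ico 1 (n-1) := by
        ext x; simp [Finset.mem_filter, Finset.mem_range, Finset.mem_Ico]; omega
      have h2' : ((n - 1 - 1 : ℕ) : ℝ) = (n:ℝ) - 2 := by
        rw [show n-1-1 = n-2 from by omega, Nat.cast_sub hn]; norm_num
      rw [h1', Finset.sum_const, Nat.card_Ico, nsmul_eq_mul, h2']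
    simp only [Finset.sum_ite_eq', Finset.mem_univ, if_true] at hsum2
    rw [hconst] at hsum2
    rw [← hc] at hsum2
    exact hsum2
  set D := (∑ j : Fin n, if 1 ≤ (j:ℕ) then lam j else 0) - ((n:ℝ) - 2) * a with hD
  set S := ∑ j : Fin n, if j ≠ i then (lam j)⁻¹ else 0 with hS
  have hS0 : 0 ≤ S := by
    apply Finset.sum_nonneg
    intro j _
    by_cases h : j = i
    · simp [h]
    · simp [h]; exact (hpos j).le
  have hDge : ((n:ℝ) - 1) * (1 - δ) * c ≤ D := by
    have k1 : ((n:ℝ) - 2) * ((1 - δ) * c) ≤ ((n:ℝ) - 2) * lam ⟨1, by omega⟩ :=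
      mul_le_mul_of_nonneg_left h2 hn2
    have : ((n:ℝ) - 2) * lam ⟨1, by omega⟩ + c - ((n:ℝ) - 2) * a ≤ D := by
      rw [hD]; linarith [hDsum]
    nlinarith [h1]
  have hDpos : 0 < D :=
    lt_of_lt_of_le (mul_pos (mul_pos hn1 (by linarith)) hcpos) hDge
  -- bound on S
  have hSle : S ≤ (1 + ε) / a := by
    rw [hSi]
    have : c⁻¹ ≤ (lam i)⁻¹ := by
      apply inv_anti₀ hipos hlic
    linarith
  have hSa : S * a ≤ 1 + ε := by
    rw [← le_div_iff₀ hapos]; exact hSle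
  rcases le_or_gt (2/3) δ with hcase | hcase
  · -- LHS nonpositive
    have h3 : (1 - 3 * δ / 2) / D ≤ 0 :=
      div_nonpos_of_nonpos_of_nonneg (by linarith) hDpos.le
    have h4 : (1 - 3 * δ / 2) / D * S ≤ 0 := mul_nonpos_of_nonpos_of_nonneg h3 hS0
    have h5 : (0:ℝ) ≤ 1 / (((n:ℝ) - 1) * lam i * a) := by positivity
    linarith
  · have hc2 : 0 < 1 - 3 * δ / 2 := by linarith
    have h23 : 0 < 2 - 3 * δ := by linarith
    have hid : (1 - 3 * δ / 2) * (1 + ε) = 1 - δ := by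
      rw [hε]; field_simp; ring
    rw [div_mul_eq_mul_div, div_le_div_iff₀ hDpos (by positivity)]
    have k1 : (1 - 3 * δ / 2) * (S * a) ≤ 1 - δ := by
      calc (1 - 3 * δ / 2) * (S * a) ≤ (1 - 3 * δ / 2) * (1 + ε) :=
            mul_le_mul_of_nonneg_left hSa hc2.le
        _ = 1 - δ := hid
    have step1 : (1 - 3 * δ / 2) * S * (((n:ℝ) - 1) * lam i * a)
        = ((1 - 3 * δ / 2) * (S * a)) * (((n:ℝ) - 1) * lam i) := by ring
    have step2 : ((1 - 3 * δ / 2) * (S * a)) * (((n:ℝ) - 1) * lam i)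
        ≤ (1 - δ) * (((n:ℝ) - 1) * lam i) :=
      mul_le_mul_of_nonneg_right k1 (by positivity)
    have step3 : (1 - δ) * (((n:ℝ) - 1) * lam i) ≤ (1 - δ) * (((n:ℝ) - 1) * c) := by
      apply mul_le_mul_of_nonneg_left _ (by linarith)
      exact mul_le_mul_of_nonneg_left hlic hn1.le
    have step4 : (1 - δ) * (((n:ℝ) - 1) * c) ≤ D := by
      calc (1 - δ) * (((n:ℝ) - 1) * c) = ((n:ℝ) - 1) * (1 - δ) * c := by ring
        _ ≤ D := hDge
    linarith
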